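/- Fix n ≥ 1. The maximum of the embedding dimension e(T), taken over all numerical semigroups T with n ∉ T all of whose minimal generators are strictly less than n/2, equals ⌊(n−1)/2⌋ − ⌊n/3⌋. Equivalently, the largest i with h_{n,i} > 0 (the degree of the h-polynomial of Δ_n) is ⌊(n−1)/2⌋ − ⌊n/3⌋. -/

import Mathlib

open Filter Topology
open scoped Classical BigOperators

/-- The set of gaps of a numerical semigroup `S ⊆ ℕ`. -/
def gapSet (S : AddSubmonoid ℕ) : Set ℕ := {n : ℕ | n ∉ S}

/-- `S` is cofinite if its set of gaps is finite. -/
def IsCofinite (S : AddSubmonoid ℕ) : Prop := (gapSet S).Finite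

/-- The minimal generators of `S`: nonzero elements of `S` that are not the
sum of two nonzero elements of `S`. -/
def minGens (S : AddSubmonoid ℕ) : Set ℕ :=
  {s : ℕ | s ∈ S ∧ s ≠ 0 ∧ ¬ ∃ a ∈ S, ∃ b ∈ S, a ≠ 0 ∧ b ≠ 0 ∧ s = a + b}

/-- The embedding dimension `e(S)`: the number of minimal generators of `S`. -/
noncomputable def embDim (S : AddSubmonoid ℕ) : ℕ := (minGens S).ncard

/-- The genus `g(S)`: the number of gaps of `S` (junk value `0` if `S` is not cofinite). -/
noncomputable def genus (S : AddSubmonoid ℕ) : ℕ := (gapSet S).ncard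

/-- The Frobenius number `F(S)`: the largest gap of `S`
(junk value `0` if `S` is not cofinite or `S = ℕ`). -/
noncomputable def frob (S : AddSubmonoid ℕ) : ℕ := sSup (gapSet S)

/-- A cofinite numerical semigroup `S ≠ ℕ` is irreducible if it is maximal with
respect to inclusion among numerical semigroups with Frobenius number `F(S)`. -/
def IsIrred (S : AddSubmonoid ℕ) : Prop :=
  IsCofinite S ∧ S ≠ ⊤ ∧
    ∀ T : AddSubmonoid ℕ, S ≤ T → frob T = frob S → T = S

/-- The number of gaps of `S` that are at most `M`. -/
noncomputable def gapsUpTo (S : AddSubmonoid ℕ) (M : ℕ) : ℕ :=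
  {x : ℕ | x ∉ S ∧ x ≤ M}.ncard

/-- The probability weight of a generating set `B ⊆ {1, …, M}` in the ER-type
model `S(M, p)`. -/
noncomputable def wt (p : ℝ) (M : ℕ) (B : Finset ℕ) : ℝ :=
  p ^ B.card * (1 - p) ^ (M - B.card)

/-- The probability in the ER-type model `S(M, p)` that the random numerical
semigroup `𝒮 = ⟨𝒜⟩` lies in the event `E`. -/
noncomputable def probEvent (M : ℕ) (p : ℝ) (E : Set (AddSubmonoid ℕ)) : ℝ :=
  ∑ B ∈ (Finset.Icc 1 M).powerset,
    if AddSubmonoid.closure (B : Set ℕ) ∈ E then wt p M B else 0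

/-- The expectation in the ER-type model `S(M, p)` of an invariant `X` of the
random numerical semigroup `𝒮 = ⟨𝒜⟩`. -/
noncomputable def expectVal (M : ℕ) (p : ℝ) (X : AddSubmonoid ℕ → ℕ) : ℝ :=
  ∑ B ∈ (Finset.Icc 1 M).powerset,
    (X (AddSubmonoid.closure (B : Set ℕ)) : ℝ) * wt p M B

/-- `h_{n,i}`: the number of numerical semigroups `T` with `n ∉ T`, embedding
dimension `i`, and all minimal generators strictly less than `n/2`. -/
noncomputable def hvec (n i : ℕ) : ℕ :=
  {T : AddSubmonoid ℕ | n ∉ T ∧ embDim T = i ∧ ∀ a ∈ minGens T, 2 * a < n}.ncard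

/-- `a_n(p)`: the probability that `n` is not in the semigroup generated by a
random subset of `{1, …, n-1}` chosen with inclusion probability `p`. -/
noncomputable def anp (n : ℕ) (p : ℝ) : ℝ :=
  ∑ A ∈ (Finset.Icc 1 (n - 1)).powerset,
    if n ∉ AddSubmonoid.closure (A : Set ℕ) then
      p ^ A.card * (1 - p) ^ (n - 1 - A.card) else 0


/-! If some minimal generator `a` has `3 * a ≤ n`, reduce modulo `a`: distinct minimal generators
have distinct residues, and no two residues add up to `n` (otherwise `n` would be a sum of two
generators plus a multiple of `a`), so `2 * e ≤ a`, while `3 * a ≠ n`. Otherwise all minimal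
generators lie in `(n / 3, (n - 1) / 2]`. That interval generates a semigroup attaining the bound:
sums of two of its elements are `< n`, sums of three are `> n`. -/

theorem AddSubmonoid.closure_minGens (T : AddSubmonoid ℕ) :
    AddSubmonoid.closure (minGens T) = T := by
  refine le_antisymm (AddSubmonoid.closure_le.mpr fun x hx => hx.1) fun x hx => ?_
  induction x using Nat.strong_induction_on with
  | _ x ih =>
    by_cases hx0 : x = 0
    · exact hx0 ▸ zero_mem _
    by_cases hgen : x ∈ minGens T
    · exact AddSubmonoid.subset_closure hgen
    obtain ⟨a, ha, b, hb, ha0, hb0, rfl⟩ : ∃ a ∈ T, ∃ b ∈ T, a ≠ 0 ∧ b ≠ 0 ∧ x = a + b := by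
      by_contra h
      exact hgen ⟨hx, hx0, h⟩
    exact add_mem (ih a (by omega) ha) (ih b (by omega) hb)

theorem minGens_injective : Function.Injective minGens := fun S T h => by
  rw [← S.closure_minGens, h, T.closure_minGens]

theorem minGens_closure_subset (A : Set ℕ) : minGens (AddSubmonoid.closure A) ⊆ A := by
  suffices ∀ x ∈ AddSubmonoid.closure A, x = 0 ∨ x ∈ A ∨
      ∃ a ∈ AddSubmonoid.closure A, ∃ b ∈ AddSubmonoid.closure A, a ≠ 0 ∧ b ≠ 0 ∧ x = a + b by
    intro x hx
    rcases this x hx.1 with h0 | hA | hsum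
    exacts [absurd h0 hx.2.1, hA, absurd hsum hx.2.2]
  intro x hx
  induction hx using AddSubmonoid.closure_induction with
  | mem g hg => exact .inr (.inl hg)
  | zero => exact .inl rfl
  | add x y hx hy ihx ihy =>
    by_cases hx0 : x = 0
    · simpa [hx0] using ihy
    by_cases hy0 : y = 0
    · simpa [hy0] using ihx
    exact .inr (.inr ⟨x, hx, y, hy, hx0, hy0, rfl⟩)

theorem exists_le_of_mem_closure {A : Set ℕ} {x : ℕ} (hx : x ∈ AddSubmonoid.closure A)
    (hx0 : x ≠ 0) : ∃ a ∈ A, a ≤ x := by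
  induction hx using AddSubmonoid.closure_induction with
  | mem g hg => exact ⟨g, hg, le_rfl⟩
  | zero => exact absurd rfl hx0
  | add x y _ _ ihx ihy =>
    by_cases hx0 : x = 0
    · obtain ⟨a, ha, hay⟩ := ihy (by omega)
      exact ⟨a, ha, by omega⟩
    · obtain ⟨a, ha, hax⟩ := ihx hx0
      exact ⟨a, ha, by omega⟩

theorem minGens_closure_of_lt_add {A : Set ℕ} (hA : ∀ x ∈ A, ∀ y ∈ A, ∀ z ∈ A, z < x + y) :
    minGens (AddSubmonoid.closure A) = A := by
  refine (minGens_closure_subset A).antisymm fun g hg => ?_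
  refine ⟨AddSubmonoid.subset_closure hg, by have := hA g hg g hg g hg; omega, ?_⟩
  rintro ⟨u, hu, v, hv, hu0, hv0, rfl⟩
  obtain ⟨a, ha, hau⟩ := exists_le_of_mem_closure hu hu0
  obtain ⟨b, hb, hbv⟩ := exists_le_of_mem_closure hv hv0
  have := hA a ha b hb _ hg
  omega

theorem exists_mul_le_of_mem_closure_Ioc {q m x : ℕ}
    (hx : x ∈ AddSubmonoid.closure (Set.Ioc q m)) : ∃ k, k * (q + 1) ≤ x ∧ x ≤ k * m := by
  induction hx using AddSubmonoid.closure_induction with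
  | mem g hg => exact ⟨1, by grind⟩
  | zero => exact ⟨0, by simp⟩
  | add x y _ _ ihx ihy =>
    obtain ⟨k, hk⟩ := ihx
    obtain ⟨l, hl⟩ := ihy
    exact ⟨k + l, by grind⟩

theorem notMem_closure_Ioc {q m n : ℕ} (hm : 2 * m < n) (hq : n < 3 * (q + 1)) :
    n ∉ AddSubmonoid.closure (Set.Ioc q m) := fun hn => by
  obtain ⟨k, hlow, hhigh⟩ := exists_mul_le_of_mem_closure_Ioc hn
  rcases Nat.lt_or_ge k 3 with hk | hk
  · interval_cases k <;> omega
  · have := Nat.mul_le_mul_right (q + 1) hk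
    omega

theorem two_mul_ncard_le_of_add_ne {G : Type*} [AddCommGroup G] [Finite G] {s : Set G} {c : G}
    (hs : ∀ x ∈ s, ∀ y ∈ s, x + y ≠ c) : 2 * s.ncard ≤ Nat.card G := by
  have hdisj : Disjoint s ((c - ·) '' s) := by
    refine Set.disjoint_left.mpr fun x hx ⟨y, hy, hyx⟩ => hs x hx y hy ?_
    rw [← hyx]
    exact sub_add_cancel c y
  calc 2 * s.ncard = (s ∪ (c - ·) '' s).ncard := by
        rw [Set.ncard_union_eq hdisj, Set.ncard_image_of_injective _ sub_right_injective]; ring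
    _ ≤ Nat.card G := Set.ncard_le_card _

section Residues

variable {T : AddSubmonoid ℕ} {a : ℕ}

theorem mul_mem_of_mem (ha : a ∈ T) (k : ℕ) : k * a ∈ T :=
  smul_eq_mul k a ▸ T.nsmul_mem ha k

theorem injOn_natCast_minGens (ha : a ∈ T) : Set.InjOn (Nat.cast : ℕ → ZMod a) (minGens T) := by
  suffices ∀ g ∈ minGens T, ∀ h ∈ minGens T, g < h → (g : ZMod a) ≠ h by
    intro g hg h hh hgh
    rcases lt_trichotomy g h with hlt | heq | hlt
    exacts [absurd hgh (this g hg h hh hlt), heq, absurd hgh.symm (this h hh g hg hlt)]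
  intro g hg h hh hlt hgh
  obtain ⟨k, hk⟩ := (Nat.modEq_iff_dvd' hlt.le).mp ((ZMod.natCast_eq_natCast_iff _ _ _).mp hgh)
  have hk0 : k * a ≠ 0 := by grind
  exact hh.2.2 ⟨g, hg.1, k * a, mul_mem_of_mem ha k, hg.2.1, hk0, by grind⟩

theorem natCast_ne_of_notMem {n x : ℕ} (hn : n ∉ T) (hx : x ∈ T) (hxn : x ≤ n) (ha : a ∈ T) :
    (x : ZMod a) ≠ n := fun hxn' => by
  obtain ⟨k, hk⟩ := (Nat.modEq_iff_dvd' hxn).mp ((ZMod.natCast_eq_natCast_iff _ _ _).mp hxn')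
  have hnx : n = x + k * a := by rw [mul_comm]; omega
  exact hn (hnx ▸ add_mem hx (mul_mem_of_mem ha k))

theorem two_mul_embDim_le {n : ℕ} (hn : n ∉ T) (ha : a ∈ T) (ha0 : a ≠ 0)
    (hsmall : ∀ g ∈ minGens T, 2 * g < n) : 2 * embDim T ≤ a := by
  have : NeZero a := ⟨ha0⟩
  have hres : ∀ x ∈ (Nat.cast : ℕ → ZMod a) '' minGens T,
      ∀ y ∈ (Nat.cast : ℕ → ZMod a) '' minGens T, x + y ≠ n := by
    rintro _ ⟨g, hg, rfl⟩ _ ⟨h, hh, rfl⟩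
    have := hsmall g hg
    have := hsmall h hh
    exact_mod_cast natCast_ne_of_notMem hn (add_mem hg.1 hh.1) (by omega) ha
  have := two_mul_ncard_le_of_add_ne hres
  rwa [(injOn_natCast_minGens ha).ncard_image, Nat.card_zmod] at this

end Residues

theorem embDim_le_of_notMem {n : ℕ} {T : AddSubmonoid ℕ} (hn : n ∉ T)
    (hsmall : ∀ g ∈ minGens T, 2 * g < n) :
    embDim T ≤ (n - 1) / 2 - n / 3 := by
  by_cases hlarge : ∀ g ∈ minGens T, n / 3 < g
  · calc embDim T ≤ (Set.Ioc (n / 3) ((n - 1) / 2)).ncard :=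
          Set.ncard_le_ncard (fun g hg => ⟨hlarge g hg, by have := hsmall g hg; omega⟩)
      _ = (n - 1) / 2 - n / 3 := Set.ncard_Ioc_nat _ _
  push Not at hlarge
  obtain ⟨a, ha, han⟩ := hlarge
  have h3a : 3 * a ≠ n := fun h => hn (h ▸ mul_mem_of_mem ha.1 3)
  have := two_mul_embDim_le hn ha.1 ha.2.1 hsmall
  omega

theorem exists_embDim_eq {n : ℕ} (hn : 1 ≤ n) :
    ∃ T : AddSubmonoid ℕ, n ∉ T ∧ (∀ a ∈ minGens T, 2 * a < n) ∧
      embDim T = (n - 1) / 2 - n / 3 := by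
  have hgens : minGens (AddSubmonoid.closure (Set.Ioc (n / 3) ((n - 1) / 2))) =
      Set.Ioc (n / 3) ((n - 1) / 2) :=
    minGens_closure_of_lt_add fun x hx y hy z hz => by grind
  refine ⟨_, notMem_closure_Ioc (q := n / 3) (m := (n - 1) / 2) (by omega) (by omega),
    fun a ha => ?_, ?_⟩
  · rw [hgens] at ha
    grind
  · rw [embDim, hgens, Set.ncard_Ioc_nat]

theorem setOf_minGens_lt_finite (n : ℕ) :
    {T : AddSubmonoid ℕ | ∀ a ∈ minGens T, 2 * a < n}.Finite :=
  Set.Finite.of_finite_image ((Set.finite_Iio n).finite_subsets.subset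
    (by rintro _ ⟨T, hT, rfl⟩ a ha; exact Set.mem_Iio.mpr (by have := hT a ha; omega)))
    minGens_injective.injOn

theorem hvec_pos_iff (n i : ℕ) :
    0 < hvec n i ↔ ∃ T : AddSubmonoid ℕ, n ∉ T ∧ embDim T = i ∧ ∀ a ∈ minGens T, 2 * a < n :=
  Set.ncard_pos ((setOf_minGens_lt_finite n).subset fun _ hT => hT.2.2)

theorem statement8 (n : ℕ) (hn : 1 ≤ n) :
    (∀ T : AddSubmonoid ℕ, n ∉ T → (∀ a ∈ minGens T, 2 * a < n) →
        embDim T ≤ (n - 1) / 2 - n / 3) ∧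
    (∃ T : AddSubmonoid ℕ, n ∉ T ∧ (∀ a ∈ minGens T, 2 * a < n) ∧
        embDim T = (n - 1) / 2 - n / 3) ∧
    (0 < hvec n ((n - 1) / 2 - n / 3) ∧
      ∀ i : ℕ, 0 < hvec n i → i ≤ (n - 1) / 2 - n / 3) := by
  obtain ⟨T, hnT, hsmall, hdim⟩ := exists_embDim_eq hn
  refine ⟨fun _ => embDim_le_of_notMem, ⟨T, hnT, hsmall, hdim⟩,
    (hvec_pos_iff n _).mpr ⟨T, hnT, hdim, hsmall⟩, fun i hi => ?_⟩
  obtain ⟨S, hnS, rfl, hSsmall⟩ := (hvec_pos_iff n i).mp hi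
  exact embDim_le_of_notMem hnS hSsmall
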